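/- For each j with 1 \le j \le m, the relation \epsilon_j(x, y), asserting that x = q_k for some k and the coefficient of q_k in the Ostrowski representation of y equals j, is first-order definable in the structure (\mathbb{N}, +, V_a). -/

import Mathlib

open FirstOrder

/-- The first-order language of `(ℕ, +, V_a)`: one binary function symbol (`+`)
and one unary function symbol (`V_a`). -/
def addVLanguage : Language where
  Functions := fun n =>
    match n with
    | 1 => Unit
    | 2 => Unit
    | _ => Empty
  Relations := fun _ => Empty

/-- The structure `(ℕ, +, V)` for the language `addVLanguage`. -/
def addVStructure (V : ℕ → ℕ) : addVLanguage.Structure ℕ where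
  funMap {n} f v :=
    match n, f, v with
    | 1, _, v => V (v 0)
    | 2, _, v => v 0 + v 1
  RelMap {n} r _ := nomatch r

/-- `b` is the (finitely supported) Ostrowski digit string of `N` based on `a`,
with associated denominator sequence `q`. -/
def IsOstRep (a q : ℕ → ℕ) (b : ℕ → ℕ) (N : ℕ) : Prop :=
  (∃ n, ∀ k, n < k → b k = 0) ∧
  b 0 = 0 ∧
  b 1 < a 1 ∧
  (∀ k, b (k + 1) ≤ a (k + 1)) ∧
  (∀ k, b (k + 2) = a (k + 2) → b (k + 1) = 0) ∧
  ∑ᶠ k, b (k + 1) * q k = N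

/-!
Split `y = z + j * q k + t`, where `z < q k` is the value of the Ostrowski digits of `y` below
`q k` and `t` that of its digits above `q k`. The digit conditions are local, so `y` has digit `j`
at `q k` exactly when such a splitting exists with `z + j * q k < q (k + 1)` and with `t` either
`0` or a number whose representation starts above `q k` (`q k < V t`) and stays valid when one
`q k` is added (`V (q k + t) = q k`). As the range of `V` is the set of the `q k`, `q (k + 1)` is
the successor of `q k` in it, and all of this is first order in `(ℕ, +, V)`.
-/

theorem Monotone.eq_of_apply_eq {α : Type*} [Preorder α] {f : ℕ → α} (hf : Monotone f)
    {m n : ℕ} (hm : f m < f (m + 1)) (hn : f n < f (n + 1)) (h : f m = f n) : m = n := by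
  by_contra hne
  rcases Nat.lt_or_gt_of_ne hne with hlt | hlt
  · exact (hm.trans_le (h ▸ hf hlt)).false
  · exact (hn.trans_le (h ▸ hf hlt)).false

theorem Monotone.isLeast_range_of_lt_succ {α : Type*} [LinearOrder α] {f : ℕ → α}
    (hf : Monotone f) {k : ℕ} (hk : f k < f (k + 1)) :
    IsLeast {u | u ∈ Set.range f ∧ f k < u} (f (k + 1)) :=
  ⟨⟨⟨k + 1, rfl⟩, hk⟩, fun _ ⟨⟨_, hm⟩, hkm⟩ => hm ▸ hf (hf.reflect_lt (hm ▸ hkm))⟩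

theorem Monotone.exists_eq_of_isLeast_range {α : Type*} [LinearOrder α] {f : ℕ → α}
    (hf : Monotone f) {x w : α} (hx : x ∈ Set.range f)
    (hw : IsLeast {u | u ∈ Set.range f ∧ x < u} w) : ∃ k, x = f k ∧ w = f (k + 1) := by
  classical
  obtain ⟨k₀, rfl⟩ := hx
  obtain ⟨⟨⟨m, rfl⟩, hm⟩, hleast⟩ := hw
  have hex : ∃ n, f k₀ < f n := ⟨m, hm⟩
  obtain ⟨k, hk⟩ : ∃ k, Nat.find hex = k + 1 :=
    Nat.exists_eq_succ_of_ne_zero fun h => (Nat.find_spec hex).not_ge (h ▸ hf (Nat.zero_le k₀))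
  have hlt : f k₀ < f (k + 1) := hk ▸ Nat.find_spec hex
  have hk₀ : k₀ ≤ k := Nat.le_of_lt_succ (hf.reflect_lt hlt)
  refine ⟨k, le_antisymm (hf hk₀) (not_lt.mp (Nat.find_min hex (by omega))), ?_⟩
  exact le_antisymm (hleast ⟨⟨k + 1, rfl⟩, hlt⟩) (hf (hk ▸ Nat.find_min' hex hm))

namespace Ostrowski

open Function

structure IsConvergentDenoms (a q : ℕ → ℕ) : Prop where
  one_le : ∀ k, 1 ≤ a (k + 1)
  zero : q 0 = 1
  one : q 1 = a 1
  succ_succ : ∀ k, q (k + 2) = a (k + 2) * q (k + 1) + q k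

variable {a q b c : ℕ → ℕ}

namespace IsConvergentDenoms

variable (hq : IsConvergentDenoms a q)
include hq

theorem pos (k : ℕ) : 0 < q k := by
  induction k using Nat.twoStepInduction with
  | zero => simp [hq.zero]
  | one => rw [hq.one]; exact hq.one_le 0
  | more k hk _ => rw [hq.succ_succ]; exact Nat.add_pos_right _ hk

theorem le_succ (k : ℕ) : q k ≤ q (k + 1) := by
  cases k with
  | zero => simpa [hq.zero, hq.one] using hq.one_le 0
  | succ k => rw [hq.succ_succ]; nlinarith [hq.one_le (k + 1)]

theorem monotone : Monotone q := monotone_nat_of_le_succ hq.le_succ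

theorem lt_succ_succ (k : ℕ) : q (k + 1) < q (k + 2) := by
  rw [hq.succ_succ]; nlinarith [hq.one_le (k + 1), hq.pos k]

theorem succ_le (k : ℕ) : q (k + 1) ≤ (a (k + 1) + 1) * q k := by
  cases k with
  | zero => simp [hq.zero, hq.one]
  | succ k => rw [hq.succ_succ]; nlinarith [hq.le_succ k]

theorem exists_lt (N : ℕ) : ∃ m, N < q m :=
  ⟨N + 2, ((strictMono_nat_of_lt_succ hq.lt_succ_succ).id_le N).trans_lt (hq.lt_succ_succ N)⟩

end IsConvergentDenoms

structure IsOstDigits (a b : ℕ → ℕ) : Prop where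
  zero : b 0 = 0
  one_lt : b 1 < a 1
  le : ∀ k, b (k + 1) ≤ a (k + 1)
  eq_zero_of_eq : ∀ k, b (k + 2) = a (k + 2) → b (k + 1) = 0

/-- As in `IsOstRep`, `b (k + 1)` is the digit of `q k`; `b 0` is unused and kept `0`. -/
noncomputable def ostVal (q b : ℕ → ℕ) : ℕ := ∑ᶠ k, b (k + 1) * q k

theorem hasFiniteSupport_iff_eventually_zero {M : Type*} [Zero M] {b : ℕ → M} :
    HasFiniteSupport b ↔ ∃ n, ∀ k, n < k → b k = 0 := by
  simp only [HasFiniteSupport, Set.finite_iff_bddAbove, bddAbove_def, mem_support]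
  exact exists_congr fun n => forall_congr' fun k => not_imp_comm.trans (by rw [not_le])

theorem hasFiniteSupport_of_eventually_zero {M : Type*} [Zero M] {b : ℕ → M} {n : ℕ}
    (h : ∀ k, n < k → b k = 0) :
    HasFiniteSupport b :=
  hasFiniteSupport_iff_eventually_zero.mpr ⟨n, h⟩

theorem hasFiniteSupport_of_le (hb : HasFiniteSupport b) (hcb : c ≤ b) :
    HasFiniteSupport c :=
  hb.subset fun i hi => (Nat.pos_of_ne_zero hi).trans_le (hcb i) |>.ne'

theorem isOstRep_iff {N : ℕ} :
    IsOstRep a q b N ↔ HasFiniteSupport b ∧ IsOstDigits a b ∧ ostVal q b = N := by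
  rw [hasFiniteSupport_iff_eventually_zero]
  exact ⟨fun ⟨hs, h0, h1, hle, heq, hN⟩ => ⟨hs, ⟨h0, h1, hle, heq⟩, hN⟩,
    fun ⟨hs, ⟨h0, h1, hle, heq⟩, hN⟩ => ⟨hs, h0, h1, hle, heq, hN⟩⟩

theorem isOstDigits_zero (ha : ∀ k, 1 ≤ a (k + 1)) : IsOstDigits a 0 :=
  ⟨rfl, ha 0, fun _ => Nat.zero_le _, fun _ _ => rfl⟩

theorem IsOstDigits.of_le (hb : IsOstDigits a b) (hcb : c ≤ b) :
    IsOstDigits a c where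
  zero := Nat.eq_zero_of_le_zero ((hcb 0).trans hb.zero.le)
  one_lt := (hcb 1).trans_lt hb.one_lt
  le k := (hcb _).trans (hb.le k)
  eq_zero_of_eq k h := Nat.le_zero.mp <|
    hb.eq_zero_of_eq k (le_antisymm (hb.le _) (h ▸ hcb _)) ▸ hcb (k + 1)

theorem IsOstDigits.isOstRep_of_le (hb : IsOstDigits a b)
    (hfin : HasFiniteSupport b) (hcb : c ≤ b) : IsOstRep a q c (ostVal q c) :=
  isOstRep_iff.mpr ⟨hasFiniteSupport_of_le hfin hcb, hb.of_le hcb, rfl⟩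

theorem IsOstDigits.lt_succ (hq : IsConvergentDenoms a q) (hb : IsOstDigits a b) {k : ℕ}
    (hk : b (k + 1) ≠ 0) : q k < q (k + 1) := by
  cases k with
  | zero => have := hb.one_lt; rw [zero_add] at hk; rw [hq.zero, hq.one]; omega
  | succ k => exact hq.lt_succ_succ k

theorem hasFiniteSupport_ostVal_summand (hb : HasFiniteSupport b) (q : ℕ → ℕ) :
    HasFiniteSupport fun k => b (k + 1) * q k := by
  refine (hb.preimage (Nat.succ_injective.injOn)).subset fun k hk => ?_
  simp only [mem_support] at hk ⊢
  exact left_ne_zero_of_mul hk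

theorem hasFiniteSupport_single (i d : ℕ) : HasFiniteSupport (Pi.single i d : ℕ → ℕ) :=
  (Set.finite_singleton i).subset Pi.support_single_subset

theorem ostVal_add (hb : HasFiniteSupport b) (hc : HasFiniteSupport c) :
    ostVal q (b + c) = ostVal q b + ostVal q c := by
  simp only [ostVal, Pi.add_apply, add_mul]
  exact finsum_add_distrib (hasFiniteSupport_ostVal_summand hb q)
    (hasFiniteSupport_ostVal_summand hc q)

theorem ostVal_single (k d : ℕ) : ostVal q (Pi.single (k + 1) d) = d * q k := by
  rw [ostVal, finsum_eq_single _ k (fun i hi => by simp [hi])]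
  simp

theorem ostVal_zero : ostVal q 0 = 0 := by simp [ostVal]

theorem digit_mul_le_ostVal (hb : HasFiniteSupport b) (k : ℕ) : b (k + 1) * q k ≤ ostVal q b :=
  single_le_finsum k (hasFiniteSupport_ostVal_summand hb q) fun _ => Nat.zero_le _

theorem IsOstDigits.sum_range_lt (hq : IsConvergentDenoms a q) (hb : IsOstDigits a b) (k : ℕ) :
    ∑ i ∈ Finset.range k, b (i + 1) * q i < q k := by
  induction k using Nat.twoStepInduction with
  | zero => simp [hq.zero]
  | one => simpa [hq.zero, hq.one] using hb.one_lt
  | more k ih ih' =>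
    rw [Finset.sum_range_succ, hq.succ_succ]
    have hle : b (k + 2) ≤ a (k + 2) := hb.le (k + 1)
    rcases hle.lt_or_eq with hlt | heq
    · nlinarith
    · rw [Finset.sum_range_succ, heq, hb.eq_zero_of_eq k heq]
      omega

theorem IsOstDigits.ostVal_lt (hq : IsConvergentDenoms a q) (hb : IsOstDigits a b) {k : ℕ}
    (hs : ∀ i, k < i → b i = 0) : ostVal q b < q k := by
  rw [ostVal, finsum_eq_sum_of_support_subset (s := Finset.range k)]
  · exact hb.sum_range_lt hq k
  · intro i hi
    simp only [mem_support, Finset.coe_range, Set.mem_Iio] at hi ⊢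
    by_contra h
    exact hi (by rw [hs (i + 1) (by omega), zero_mul])

theorem isOstRep_zero (hq : IsConvergentDenoms a q) : IsOstRep a q 0 0 :=
  isOstRep_iff.mpr ⟨by simp [HasFiniteSupport], isOstDigits_zero hq.one_le, ostVal_zero⟩

theorem IsOstDigits.add_single (hq : IsConvergentDenoms a q) (hb : IsOstDigits a b) {k d : ℕ}
    (hs : ∀ i, k < i → b i = 0) (hlt : ostVal q b + d * q k < q (k + 1)) :
    IsOstDigits a (b + Pi.single (k + 1) d) := by
  have hval : ∀ i, (b + Pi.single (k + 1) d : ℕ → ℕ) i = if i = k + 1 then d else b i := by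
    intro i
    by_cases h : i = k + 1 <;> simp [h, hs]
  have hd : d ≤ a (k + 1) :=
    Nat.lt_succ_iff.mp (Nat.lt_of_mul_lt_mul_right ((Nat.le_add_left _ _).trans_lt
      (hlt.trans_le (hq.succ_le k))))
  have hd_one : k = 0 → d < a 1 := by
    rintro rfl
    simpa [hq.zero, hq.one] using (Nat.le_add_left _ _).trans_lt hlt
  -- a maximal digit `d` leaves room below it only for a value less than `q (k - 1)`
  have hd_max : d = a (k + 1) → b k = 0 := by
    intro hda
    cases k with
    | zero => exact hb.zero
    | succ k =>
      have := digit_mul_le_ostVal (q := q) (hasFiniteSupport_of_eventually_zero hs) k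
      rw [hq.succ_succ, ← hda] at hlt
      nlinarith [hq.pos k]
  refine ⟨?_, ?_, fun i => ?_, fun i h => ?_⟩
  · simp [hval, hb.zero]
  · rw [hval]
    split_ifs with h
    · exact hd_one (by omega)
    · exact hb.one_lt
  · rw [hval]
    split_ifs with h
    · exact (Nat.succ_injective h) ▸ hd
    · exact hb.le i
  · rw [hval] at h ⊢
    split_ifs at h ⊢ with h₁ h₂ h₂
    · omega
    · rw [hs (i + 2) (by omega)] at h
      exact absurd h.symm (Nat.one_le_iff_ne_zero.mp (hq.one_le (i + 1)))
    · obtain rfl : k = i + 1 := by omega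
      exact hd_max h
    · exact hb.eq_zero_of_eq i h

theorem IsOstDigits.add_of_separated (hb : IsOstDigits a b) (hc : IsOstDigits a c) {m : ℕ}
    (hbs : ∀ i, m < i → b i = 0) (hcs : ∀ i, i ≤ m → c i = 0) (hcm : c (m + 1) ≠ a (m + 1)) :
    IsOstDigits a (b + c) where
  zero := by simp [hb.zero, hc.zero]
  one_lt := by
    rcases Nat.eq_zero_or_pos m with rfl | hm
    · simpa [hbs 1 one_pos] using hc.one_lt
    · simpa [hcs 1 hm] using hb.one_lt
  le k := by
    rcases le_or_gt (k + 1) m with hk | hk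
    · simpa [hcs _ hk] using hb.le k
    · simpa [hbs _ hk] using hc.le k
  eq_zero_of_eq k h := by
    simp only [Pi.add_apply] at h ⊢
    rcases lt_trichotomy (k + 1) m with hk | rfl | hk
    · rw [hcs (k + 2) hk] at h
      rw [hcs (k + 1) hk.le]
      simpa using hb.eq_zero_of_eq k (by simpa using h)
    · rw [hbs _ (Nat.lt_succ_self _)] at h
      exact absurd (by simpa using h) hcm
    · rw [hbs (k + 2) (by omega)] at h
      rw [hbs (k + 1) hk]
      simpa using hc.eq_zero_of_eq k (by simpa using h)

theorem IsOstRep.eq_zero_of_lt (hq : IsConvergentDenoms a q) {N : ℕ} (h : IsOstRep a q b N)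
    {k : ℕ} (hN : N < q k) : ∀ i, k < i → b i = 0 := by
  obtain ⟨hfin, -, rfl⟩ := isOstRep_iff.mp h
  intro i hi
  obtain ⟨j, rfl⟩ : ∃ j, i = j + 1 := ⟨i - 1, by omega⟩
  by_contra hj
  have := digit_mul_le_ostVal (q := q) hfin j
  have := hq.monotone (Nat.le_of_lt_succ hi)
  nlinarith [Nat.one_le_iff_ne_zero.mpr hj]

theorem exists_isOstRep (hq : IsConvergentDenoms a q) (N : ℕ) : ∃ b, IsOstRep a q b N := by
  induction N using Nat.strong_induction_on with
  | _ N ih =>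
  rcases Nat.eq_zero_or_pos N with rfl | hN
  · exact ⟨0, isOstRep_zero hq⟩
  classical
  -- greedy step: `q k ≤ N < q (k + 1)`, leading digit `N / q k`, remainder `N % q k`
  obtain ⟨k, hk⟩ : ∃ k, Nat.find (hq.exists_lt N) = k + 1 :=
    Nat.exists_eq_succ_of_ne_zero fun h => by
      have := Nat.find_spec (hq.exists_lt N)
      rw [h, hq.zero] at this
      omega
  have hkN : q k ≤ N := not_lt.mp (Nat.find_min (hq.exists_lt N) (by omega))
  have hNk : N < q (k + 1) := hk ▸ Nat.find_spec (hq.exists_lt N)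
  have hr : N % q k < q k := Nat.mod_lt _ (hq.pos k)
  obtain ⟨c, hc⟩ := ih (N % q k) (hr.trans_le hkN)
  have hcs := IsOstRep.eq_zero_of_lt hq hc hr
  obtain ⟨hcfin, hcd, hcval⟩ := isOstRep_iff.mp hc
  have hsum : ostVal q c + N / q k * q k = N := hcval ▸ Nat.mod_add_div' N (q k)
  refine ⟨c + Pi.single (k + 1) (N / q k), isOstRep_iff.mpr ⟨?_, ?_, ?_⟩⟩
  · exact hcfin.add (hasFiniteSupport_single _ _)
  · exact hcd.add_single hq hcs (hsum.symm ▸ hNk)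
  · rw [ostVal_add hcfin (hasFiniteSupport_single _ _), ostVal_single, hsum]

structure IsOstrowskiV (a q V : ℕ → ℕ) : Prop where
  zero : V 0 = 1
  eq : ∀ N b k, IsOstRep a q b N → 0 < b (k + 1) → (∀ i, i < k → b (i + 1) = 0) → V N = q k

namespace IsOstrowskiV

variable {V : ℕ → ℕ} (hV : IsOstrowskiV a q V)
include hV

theorem eq_of_isOstRep {N k : ℕ} (h : IsOstRep a q b N) (hk : b (k + 1) ≠ 0)
    (hlow : ∀ i ≤ k, b i = 0) : V N = q k :=
  hV.eq N b k h (Nat.pos_of_ne_zero hk) fun i hi => hlow (i + 1) hi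

theorem exists_eq_of_isOstRep {N : ℕ} (h : IsOstRep a q b N) (hN : N ≠ 0) :
    ∃ k, V N = q k ∧ b (k + 1) ≠ 0 ∧ ∀ i ≤ k, b i = 0 := by
  classical
  obtain ⟨hfin, hb, rfl⟩ := isOstRep_iff.mp h
  have hex : ∃ i, b i ≠ 0 := by
    by_contra! hzero
    exact hN (by rw [show b = 0 from funext hzero, ostVal_zero])
  obtain ⟨k, hk⟩ : ∃ k, Nat.find hex = k + 1 :=
    Nat.exists_eq_succ_of_ne_zero fun h0 => Nat.find_spec hex (by rw [h0, hb.zero])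
  have hlow : ∀ i ≤ k, b i = 0 := fun i hi => not_not.mp (Nat.find_min hex (by omega))
  have hbk : b (k + 1) ≠ 0 := hk ▸ Nat.find_spec hex
  exact ⟨k, hV.eq_of_isOstRep h hbk hlow, hbk, hlow⟩

theorem range_eq (hq : IsConvergentDenoms a q) : Set.range V = Set.range q := by
  ext x
  constructor
  · rintro ⟨N, rfl⟩
    rcases eq_or_ne N 0 with rfl | hN
    · exact ⟨0, hV.zero ▸ hq.zero⟩
    obtain ⟨b, hb⟩ := exists_isOstRep hq N
    obtain ⟨k, hk, -⟩ := hV.exists_eq_of_isOstRep hb hN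
    exact ⟨k, hk.symm⟩
  · rintro ⟨k, rfl⟩
    cases k with
    | zero => exact ⟨0, hV.zero.trans hq.zero.symm⟩
    | succ k =>
      have hd : IsOstDigits a (0 + Pi.single (k + 2) 1) :=
        (isOstDigits_zero hq.one_le).add_single hq (fun _ _ => rfl)
          (by simpa [ostVal_zero] using hq.lt_succ_succ k)
      have hrep : IsOstRep a q (Pi.single (k + 2) 1) (q (k + 1)) :=
        isOstRep_iff.mpr ⟨hasFiniteSupport_single _ _, by simpa using hd, by simp [ostVal_single]⟩
      exact ⟨q (k + 1),
        hV.eq_of_isOstRep hrep (by simp) fun i hi => by simp [Pi.single_apply]; omega⟩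

end IsOstrowskiV

/-- The paper's formula for `ε_j`, with `s_I(x)` expressed through `IsLeast` and its two
disjuncts merged by allowing `t = 0`. -/
def EpsRel (V : ℕ → ℕ) (j x y : ℕ) : Prop :=
  ∃ w z t, x ∈ Set.range V ∧ IsLeast {u | u ∈ Set.range V ∧ x < u} w ∧ z < x ∧ z + j * x < w ∧
    (t = 0 ∨ x < V t ∧ V (x + t) = x) ∧ y = z + j * x + t

variable {V : ℕ → ℕ}

theorem epsRel_of_isOstRep (hq : IsConvergentDenoms a q) (hV : IsOstrowskiV a q V) {j k y : ℕ}
    (hj : j ≠ 0) (hrep : IsOstRep a q b y) (hbk : b (k + 1) = j) : EpsRel V j (q k) y := by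
  obtain ⟨hfin, hb, rfl⟩ := isOstRep_iff.mp hrep
  set L := (Set.Iic k).indicator b
  set H := (Set.Ioi (k + 1)).indicator b
  have hsplit : b = L + Pi.single (k + 1) j + H := by
    ext i
    simp only [L, H, Pi.add_apply, Set.indicator_apply, Set.mem_Iic, Set.mem_Ioi, Pi.single_apply]
    split_ifs <;> subst_vars <;> omega
  have hxt_le : Pi.single (k + 1) 1 + H ≤ b := by
    rw [hsplit]
    intro i
    simp only [Pi.add_apply, Pi.single_apply]
    split_ifs <;> omega
  have hLfin : HasFiniteSupport L := hasFiniteSupport_of_le hfin (Set.indicator_le_self _ _)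
  have hHfin : HasFiniteSupport H := hasFiniteSupport_of_le hfin (Set.indicator_le_self _ _)
  have hL : IsOstDigits a L := hb.of_le (Set.indicator_le_self _ _)
  have hH : IsOstRep a q H (ostVal q H) := hb.isOstRep_of_le hfin (Set.indicator_le_self _ _)
  have hLj : IsOstDigits a (L + Pi.single (k + 1) j) := hb.of_le (hsplit ▸ le_self_add)
  have hz : ostVal q L < q k := hL.ostVal_lt hq fun i hi => by simp [L, hi.not_ge]
  have hzj : ostVal q L + j * q k < q (k + 1) := by
    rw [← ostVal_single, ← ostVal_add hLfin (hasFiniteSupport_single _ _)]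
    exact hLj.ostVal_lt hq fun i hi => by simp [L, hi.ne']; omega
  have hqk : q k < q (k + 1) := hb.lt_succ hq (hbk ▸ hj)
  refine ⟨q (k + 1), ostVal q L, ostVal q H, hV.range_eq hq ▸ ⟨k, rfl⟩,
    hV.range_eq hq ▸ hq.monotone.isLeast_range_of_lt_succ hqk, hz, hzj, ?_, ?_⟩
  · rcases eq_or_ne (ostVal q H) 0 with ht | ht
    · exact .inl ht
    obtain ⟨m, hVm, hHm, -⟩ := hV.exists_eq_of_isOstRep hH ht
    have hkm : k + 1 ≤ m := by
      by_contra h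
      exact hHm (by simp [H]; omega)
    refine .inr ⟨hVm ▸ hqk.trans_le (hq.monotone hkm), ?_⟩
    have hxt := hb.isOstRep_of_le (q := q) hfin hxt_le
    rw [ostVal_add (hasFiniteSupport_single _ _) hHfin, ostVal_single, one_mul] at hxt
    exact hV.eq_of_isOstRep hxt (by simp [H]) fun i hi => by simp [H, Pi.single_apply]; omega
  · conv_lhs => rw [hsplit]
    rw [ostVal_add (hLfin.add (hasFiniteSupport_single _ _)) hHfin,
      ostVal_add hLfin (hasFiniteSupport_single _ _), ostVal_single]

theorem exists_isOstRep_high (hq : IsConvergentDenoms a q) (hV : IsOstrowskiV a q V) {κ t : ℕ}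
    (hκ : q κ < q (κ + 1)) (hVt : q κ < V t) (hVxt : V (q κ + t) = q κ) :
    ∃ H, IsOstRep a q H t ∧ (∀ i ≤ κ + 1, H i = 0) ∧ H (κ + 2) ≠ a (κ + 2) := by
  have ht : t ≠ 0 := by
    rintro rfl
    have := hq.pos κ
    rw [hV.zero] at hVt
    omega
  obtain ⟨c, hrep⟩ := exists_isOstRep hq (q κ + t)
  obtain ⟨m, hVm, hcm, hclow⟩ := hV.exists_eq_of_isOstRep hrep (by omega)
  obtain ⟨hfin, hc, hval⟩ := isOstRep_iff.mp hrep
  obtain rfl : m = κ := hq.monotone.eq_of_apply_eq (hc.lt_succ hq hcm) hκ (hVm ▸ hVxt)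
  -- removing the least term `q m` of `q m + t` leaves a representation of `t`
  set H := c - Pi.single (m + 1) 1
  have hHc : H ≤ c := tsub_le_self
  have hcH : c = H + Pi.single (m + 1) 1 := by
    ext i
    simp only [H, Pi.add_apply, Pi.sub_apply, Pi.single_apply]
    split_ifs <;> subst_vars <;> omega
  have hH : IsOstRep a q H t := by
    refine isOstRep_iff.mpr ⟨hasFiniteSupport_of_le hfin hHc, hc.of_le hHc, ?_⟩
    rw [hcH, ostVal_add (hasFiniteSupport_of_le hfin hHc) (hasFiniteSupport_single _ _),
      ostVal_single, one_mul] at hval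
    omega
  have hHlow : ∀ i ≤ m, H i = 0 := fun i hi => Nat.eq_zero_of_le_zero (hclow i hi ▸ hHc i)
  have hHm : H (m + 1) = 0 := by
    by_contra hHm
    have := hV.eq_of_isOstRep hH hHm hHlow
    omega
  refine ⟨H, hH, fun i hi => ?_, ?_⟩
  · rcases hi.lt_or_eq with hi | rfl
    · exact hHlow i (by omega)
    · exact hHm
  · have : H (m + 2) = c (m + 2) := by simp [H]
    exact this ▸ mt (hc.eq_zero_of_eq m) hcm

theorem exists_isOstRep_of_epsRel (hq : IsConvergentDenoms a q) (hV : IsOstrowskiV a q V)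
    {j x y : ℕ} (h : EpsRel V j x y) : ∃ k b, x = q k ∧ IsOstRep a q b y ∧ b (k + 1) = j := by
  obtain ⟨w, z, t, hx, hw, hzx, hzjw, ht, rfl⟩ := h
  rw [hV.range_eq hq] at hx hw
  obtain ⟨κ, rfl, rfl⟩ := hq.monotone.exists_eq_of_isLeast_range hx hw
  obtain ⟨H, hHrep, hHlow, hHtop⟩ :
      ∃ H, IsOstRep a q H t ∧ (∀ i ≤ κ + 1, H i = 0) ∧ H (κ + 2) ≠ a (κ + 2) := by
    rcases ht with rfl | ⟨hVt, hVxt⟩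
    · exact ⟨0, isOstRep_zero hq, fun _ _ => rfl,
        (Nat.one_le_iff_ne_zero.mp (hq.one_le (κ + 1))).symm⟩
    · exact exists_isOstRep_high hq hV hw.1.2 hVt hVxt
  obtain ⟨L, hLrep⟩ := exists_isOstRep hq z
  have hLs := IsOstRep.eq_zero_of_lt hq hLrep hzx
  obtain ⟨hLfin, hL, rfl⟩ := isOstRep_iff.mp hLrep
  obtain ⟨hHfin, hH, rfl⟩ := isOstRep_iff.mp hHrep
  have hM := hL.add_single hq hLs hzjw
  have hMs : ∀ i, κ + 1 < i → (L + Pi.single (κ + 1) j : ℕ → ℕ) i = 0 := fun i hi => by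
    simp [hLs i (by omega), hi.ne']
  refine ⟨κ, L + Pi.single (κ + 1) j + H, rfl,
    isOstRep_iff.mpr ⟨?_, hM.add_of_separated hH hMs hHlow hHtop, ?_⟩, ?_⟩
  · exact (hLfin.add (hasFiniteSupport_single _ _)).add hHfin
  · rw [ostVal_add (hLfin.add (hasFiniteSupport_single _ _)) hHfin,
      ostVal_add hLfin (hasFiniteSupport_single _ _), ostVal_single]
  · simp [hLs (κ + 1) (by omega), hHlow (κ + 1) le_rfl]

theorem exists_digit_eq_iff_epsRel (hq : IsConvergentDenoms a q) (hV : IsOstrowskiV a q V)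
    {j x y : ℕ} (hj : j ≠ 0) :
    (∃ k b, x = q k ∧ IsOstRep a q b y ∧ b (k + 1) = j) ↔ EpsRel V j x y :=
  ⟨fun ⟨_, _, hx, hb, hbk⟩ => hx ▸ epsRel_of_isOstRep hq hV hj hb hbk,
    exists_isOstRep_of_epsRel hq hV⟩

end Ostrowski

namespace AddV

open Language

variable {α : Type*}

instance : Add (addVLanguage.Term α) :=
  ⟨fun t₁ t₂ => Term.func (l := 2) () ![t₁, t₂]⟩

def app (t : addVLanguage.Term α) : addVLanguage.Term α := Term.func (l := 1) () ![t]

def addMul (t : addVLanguage.Term α) : ℕ → addVLanguage.Term α → addVLanguage.Term α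
  | 0, _ => t
  | n + 1, s => addMul t n s + s

noncomputable def memRange (t : addVLanguage.Term α) : addVLanguage.Formula α :=
  Formula.iExs Unit (Term.equal (app (Term.var (Sum.inr ()))) (t.relabel Sum.inl))

noncomputable def lt (t₁ t₂ : addVLanguage.Term α) : addVLanguage.Formula α :=
  Formula.iExs Unit
    (Term.equal (t₁.relabel Sum.inl + Term.var (Sum.inr ())) (t₂.relabel Sum.inl) ⊓
      ∼(Term.equal (t₁.relabel Sum.inl) (t₂.relabel Sum.inl)))

section realize

variable (V : ℕ → ℕ) (v : α → ℕ)

@[simp] lemma realize_add (t₁ t₂ : addVLanguage.Term α) :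
    @Term.realize _ ℕ (addVStructure V) _ v (t₁ + t₂) =
      @Term.realize _ ℕ (addVStructure V) _ v t₁ +
        @Term.realize _ ℕ (addVStructure V) _ v t₂ :=
  rfl

@[simp] lemma realize_app (t : addVLanguage.Term α) :
    @Term.realize _ ℕ (addVStructure V) _ v (app t) =
      V (@Term.realize _ ℕ (addVStructure V) _ v t) :=
  rfl

@[simp] lemma realize_addMul (t : addVLanguage.Term α) (n : ℕ) (s : addVLanguage.Term α) :
    @Term.realize _ ℕ (addVStructure V) _ v (addMul t n s) =
      @Term.realize _ ℕ (addVStructure V) _ v t +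
        n * @Term.realize _ ℕ (addVStructure V) _ v s := by
  induction n with
  | zero => simp [addMul]
  | succ n ih => simp only [addMul, realize_add, ih]; ring

@[simp] lemma realize_memRange (t : addVLanguage.Term α) :
    @Formula.Realize _ ℕ (addVStructure V) _ (memRange t) v ↔
      @Term.realize _ ℕ (addVStructure V) _ v t ∈ Set.range V := by
  let _ := addVStructure V
  simp only [memRange, Formula.realize_iExs, Formula.realize_equal, realize_app, Term.realize_var,
    Sum.elim_inr, Term.realize_relabel, Sum.elim_comp_inl, Set.mem_range]
  exact ⟨fun ⟨s, h⟩ => ⟨s (), h⟩, fun ⟨s, h⟩ => ⟨fun _ => s, h⟩⟩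

@[simp] lemma realize_lt (t₁ t₂ : addVLanguage.Term α) :
    @Formula.Realize _ ℕ (addVStructure V) _ (lt t₁ t₂) v ↔
      @Term.realize _ ℕ (addVStructure V) _ v t₁ < @Term.realize _ ℕ (addVStructure V) _ v t₂ := by
  let _ := addVStructure V
  simp only [lt, Formula.realize_iExs, Formula.realize_inf, Formula.realize_equal, realize_add,
    Term.realize_relabel, Sum.elim_comp_inl, Term.realize_var, Sum.elim_inr, Formula.realize_not,
    exists_and_right]
  refine ⟨fun ⟨⟨e, h⟩, hne⟩ => lt_of_le_of_ne (h ▸ Nat.le_add_right _ _) hne, fun h => ?_⟩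
  exact ⟨⟨fun _ => _, Nat.add_sub_of_le h.le⟩, h.ne⟩

end realize

noncomputable def epsFormula (j : ℕ) : addVLanguage.Formula (Fin 2) :=
  let x : addVLanguage.Term (Fin 2 ⊕ Fin 3) := Term.var (.inl 0)
  let y : addVLanguage.Term (Fin 2 ⊕ Fin 3) := Term.var (.inl 1)
  let w : addVLanguage.Term (Fin 2 ⊕ Fin 3) := Term.var (.inr 0)
  let z : addVLanguage.Term (Fin 2 ⊕ Fin 3) := Term.var (.inr 1)
  let t : addVLanguage.Term (Fin 2 ⊕ Fin 3) := Term.var (.inr 2)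
  let u : addVLanguage.Term ((Fin 2 ⊕ Fin 3) ⊕ Unit) := Term.var (.inr ())
  Formula.iExs (Fin 3) <|
    memRange x ⊓
    (memRange w ⊓ lt x w ⊓
      ∼(Formula.iExs Unit (memRange u ⊓ lt (x.relabel .inl) u ⊓ lt u (w.relabel .inl)))) ⊓
    lt z x ⊓ lt (addMul z j x) w ⊓
    -- `t + t = t` expresses `t = 0`: the language has no constants
    (Term.equal (t + t) t ⊔ (lt x (app t) ⊓ Term.equal (app (x + t)) x)) ⊓
    Term.equal y (addMul z j x + t)

lemma realize_epsFormula (V : ℕ → ℕ) (j : ℕ) (v : Fin 2 → ℕ) :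
    @Formula.Realize _ ℕ (addVStructure V) _ (epsFormula j) v ↔
      Ostrowski.EpsRel V j (v 0) (v 1) := by
  let _ := addVStructure V
  simp only [epsFormula, Ostrowski.EpsRel, Formula.realize_iExs, Formula.realize_inf,
    Formula.realize_sup, Formula.realize_not, Formula.realize_equal, realize_memRange, realize_lt,
    realize_add, realize_app, realize_addMul, Term.realize_relabel, Term.realize_var,
    Function.comp_apply, Sum.elim_inl, Sum.elim_inr, not_exists, not_and, not_lt]
  constructor
  · rintro ⟨i, ⟨⟨⟨⟨hx, ⟨hw, hxw⟩, hleast⟩, hz⟩, hzj⟩, ht⟩, hy⟩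
    exact ⟨i 0, i 1, i 2, hx, ⟨⟨hw, hxw⟩, fun u hu => hleast (fun _ => u) hu⟩, hz, hzj,
      by omega, hy⟩
  · rintro ⟨w, z, t, hx, ⟨⟨hw, hxw⟩, hleast⟩, hz, hzj, ht, hy⟩
    exact ⟨![w, z, t], ⟨⟨⟨⟨hx, ⟨hw, hxw⟩, fun u hu => hleast hu⟩, hz⟩, hzj⟩, by simpa using ht⟩,
      hy⟩

end AddV

theorem epsilon_j_definable_general
    (a q : ℕ → ℕ)
    (ha : ∀ k, 1 ≤ a (k + 1))
    (hq0 : q 0 = 1) (hq1 : q 1 = a 1)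
    (hq : ∀ k, q (k + 2) = a (k + 2) * q (k + 1) + q k)
    (c : ℕ)
    (V : ℕ → ℕ)
    (hV0 : V 0 = 1)
    (hV : ∀ N b k, IsOstRep a q b N → 0 < b (k + 1) → (∀ i, i < k → b (i + 1) = 0) →
      V N = q k) :
    ∀ j, 1 ≤ j → j ≤ 2 * c + 1 →
      @Set.Definable ℕ (∅ : Set ℕ) addVLanguage (addVStructure V) (Fin 2)
        {v : Fin 2 → ℕ | ∃ k b, v 0 = q k ∧ IsOstRep a q b (v 1) ∧ b (k + 1) = j} := by
  intro j hj _
  let _ := addVStructure V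
  rw [Set.empty_definable_iff]
  refine ⟨AddV.epsFormula j, Set.ext fun v => ?_⟩
  exact (Ostrowski.exists_digit_eq_iff_epsRel ⟨ha, hq0, hq1, hq⟩ ⟨hV0, hV⟩ (by omega)).trans
    (AddV.realize_epsFormula V j v).symm

/-- Let `a` be a quadratic irrational (i.e. with eventually
periodic continued fraction digits `(a_k)`, all positive and bounded by `μ ≤ c`),
`q` the denominators of its convergents, and `V : ℕ → ℕ` the function sending
`x ≥ 1` to the least `q_k` occurring with nonzero coefficient in the Ostrowski
representation of `x` (and `V 0 = 1`). Then for each `j` with `1 ≤ j ≤ 2c + 1`,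
the relation `ε_j(x, y)`, asserting that `x = q_k` for some `k` and that the
coefficient of `q_k` in the Ostrowski representation of `y` equals `j`, is
first-order definable (without parameters) in the structure `(ℕ, +, V_a)`. -/
theorem epsilon_j_definable
    (a q : ℕ → ℕ)
    (ha : ∀ k, 1 ≤ a (k + 1))
    (hq0 : q 0 = 1) (hq1 : q 1 = a 1)
    (hq : ∀ k, q (k + 2) = a (k + 2) * q (k + 1) + q k)
    (p K : ℕ) (hp : 1 ≤ p) (hper : ∀ k, K ≤ k → a (k + p) = a k)
    (c : ℕ) (hc : ∀ k, a (k + 1) ≤ c)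
    (V : ℕ → ℕ)
    (hV0 : V 0 = 1)
    (hV : ∀ N b k, IsOstRep a q b N → 0 < b (k + 1) → (∀ i, i < k → b (i + 1) = 0) →
      V N = q k) :
    ∀ j, 1 ≤ j → j ≤ 2 * c + 1 →
      @Set.Definable ℕ (∅ : Set ℕ) addVLanguage (addVStructure V) (Fin 2)
        {v : Fin 2 → ℕ | ∃ k b, v 0 = q k ∧ IsOstRep a q b (v 1) ∧ b (k + 1) = j} :=
  epsilon_j_definable_general a q ha hq0 hq1 hq c V hV0 hV
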